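/- Let x ∈ ℝ^d, k ∈ [d], p := k/d, and S(x) = (d/k)·rand_k(x) with ω a uniformly random k-element subset of {1,...,d}. Then E_ω[‖S(x) − x‖²] = (1/p − 1)·‖x‖², where ‖·‖ is the Euclidean norm. -/

import Mathlib

/-!
Expanding the square, `(c·1[j ∈ ω]·x_j - x_j)² = x_j² + (c² - 2c)·1[j ∈ ω]·x_j²`, so the
expectation only involves the inclusion probability `P(j ∈ ω) = k/d`, which comes from
`d·C(d-1, k-1) = k·C(d, k)`. With `c = d/k` this gives `(1 + (c² - 2c)·k/d)·‖x‖² = (d/k - 1)·‖x‖²`.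
-/

open Finset

theorem Finset.card_mul_card_filter_mem_powersetCard {α : Type*} [DecidableEq α] {t : Finset α}
    {j : α} (hj : j ∈ t) (n : ℕ) :
    #t * #{ω ∈ t.powersetCard n | j ∈ ω} = n * #(t.powersetCard n) := by
  obtain ⟨t', ht'⟩ : ∃ t', #t = t' + 1 := ⟨#t - 1, by have := card_pos.2 ⟨j, hj⟩; omega⟩
  cases n with
  | zero => simp
  | succ m =>
    simp_rw [← singleton_subset_iff (a := j)]
    rw [card_filter_powersetCard_subset _ _ _ (singleton_subset_iff.2 hj) (by simp),
      card_powersetCard, ht', card_singleton, Nat.add_sub_cancel, Nat.add_sub_cancel,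
      Nat.add_one_mul_choose_eq, mul_comm]

section

variable {ι : Type*} [Fintype ι] [DecidableEq ι]

theorem card_mul_sum_powersetCard_ite_mem (n : ℕ) (j : ι) (a : ℝ) :
    (Fintype.card ι : ℝ) * ∑ ω ∈ (univ : Finset ι).powersetCard n, (if j ∈ ω then a else 0)
      = n * #((univ : Finset ι).powersetCard n) * a := by
  have h := card_mul_card_filter_mem_powersetCard (mem_univ j) n
  rw [card_univ] at h
  rw [← sum_filter, sum_const, nsmul_eq_mul, ← mul_assoc]
  congr 1
  exact_mod_cast h

theorem card_mul_sum_powersetCard_sq_sub (n : ℕ) (j : ι) (c y : ℝ) :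
    (Fintype.card ι : ℝ) * ∑ ω ∈ (univ : Finset ι).powersetCard n,
        (c * (if j ∈ ω then y else 0) - y) ^ 2
      = #((univ : Finset ι).powersetCard n) * (Fintype.card ι + n * (c ^ 2 - 2 * c)) * y ^ 2 := by
  have hsq : ∀ ω : Finset ι, (c * (if j ∈ ω then y else 0) - y) ^ 2
      = y ^ 2 + (c ^ 2 - 2 * c) * (if j ∈ ω then y ^ 2 else 0) := by
    intro ω; split_ifs <;> ring
  simp only [hsq, sum_add_distrib, sum_const, nsmul_eq_mul, ← mul_sum, mul_add,
    mul_left_comm _ (c ^ 2 - 2 * c), card_mul_sum_powersetCard_ite_mem]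
  ring

theorem card_mul_sum_powersetCard_sum_sq_sub (n : ℕ) (c : ℝ) (x : ι → ℝ) :
    (Fintype.card ι : ℝ) * ∑ ω ∈ (univ : Finset ι).powersetCard n,
        ∑ j, (c * (if j ∈ ω then x j else 0) - x j) ^ 2
      = #((univ : Finset ι).powersetCard n) * (Fintype.card ι + n * (c ^ 2 - 2 * c)) *
          ∑ j, x j ^ 2 := by
  rw [sum_comm, mul_sum, mul_sum]
  exact sum_congr rfl fun j _ => card_mul_sum_powersetCard_sq_sub n j c (x j)

end

/-- Variance of the scaled rand_k sparsifier: with p = k/d,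
`E_ω ‖S(x) - x‖² = (1/p - 1) ‖x‖²`, where `‖·‖²` is the sum of squared coordinates. -/
theorem randk_variance (d k : ℕ) (hk1 : 1 ≤ k) (hkd : k ≤ d) (x : Fin d → ℝ) :
    (((Finset.univ : Finset (Fin d)).powersetCard k).card : ℝ)⁻¹ *
        ∑ ω ∈ (Finset.univ : Finset (Fin d)).powersetCard k,
          ∑ j, (((d : ℝ) / k) * (if j ∈ ω then x j else 0) - x j) ^ 2
      = (1 / ((k : ℝ) / d) - 1) * ∑ j, (x j) ^ 2 := by
  have hk : (k : ℝ) ≠ 0 := by norm_cast; omega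
  have hd : (d : ℝ) ≠ 0 := by norm_cast; omega
  have hM : (#((univ : Finset (Fin d)).powersetCard k) : ℝ) ≠ 0 := by
    rw [card_powersetCard, card_univ, Fintype.card_fin]
    exact_mod_cast (Nat.choose_pos hkd).ne'
  have h := card_mul_sum_powersetCard_sum_sq_sub k ((d : ℝ) / k) x
  rw [Fintype.card_fin] at h
  rw [← mul_right_inj' hd, mul_left_comm, h]
  field_simp
  ring
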